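/- The cobordism classes of nanowords over (α, τ) form a group under concatenation, in which the inverse of the class of a nanoword w is the class of the opposite nanoword w⁻. -/

import Mathlib

/-! Nanowords over an alphabet `α` with involution `τ`, following Turaev.
A letter is a pair (id, α-value); a nanoword is a word in which every letter id
occurs exactly twice, with a well-defined α-value. -/

/-- A letter of an `α`-alphabet: an identifier together with its projection to `α`. -/
abbrev Letter (α : Type) := ℕ × α

/-- `w` is a nanoword: each occurring letter id occurs exactly twice and determines
its `α`-value. -/
def IsNanoword {α : Type} (w : List (Letter α)) : Prop :=
  (∀ p ∈ w, (w.filter fun q => q.1 == p.1).length = 2) ∧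
  ∀ p ∈ w, ∀ q ∈ w, p.1 = q.1 → p.2 = q.2

/-- The set of letter ids occurring in a word. -/
def lettersOf {α : Type} (w : List (Letter α)) : Set ℕ := {n | ∃ a, (n, a) ∈ w}

/-- `splice [x₁,…,x_{k+1}] [v₁,…,v_k] = x₁ v₁ x₂ v₂ ⋯ x_k v_k x_{k+1}`:
the nanoword with a factor `(v₁|⋯|v_k)`. -/
def splice {α : Type} : List (List (Letter α)) → List (List (Letter α)) → List (Letter α)
  | [], _ => []
  | x :: xs, [] => x ++ splice xs []
  | x :: xs, v :: vs => x ++ v ++ splice xs vs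

/-- The nanophrase `vs = (v₁|⋯|v_k)` is symmetric: there is `ι` with `ι ∘ vᵣ = vᵣ⁻`
for all `r`, and `|ι B| = τ^{ε B} |B|` where `ε B = 0` iff both occurrences of `B`
lie in the same word of `vs`. -/
def IsSymPhrase {α : Type} (τ : α → α) (vs : List (List (Letter α))) : Prop :=
  ∃ ι : Letter α → Letter α,
    (∀ v ∈ vs, v.map ι = v.reverse) ∧
    ∀ B ∈ vs.flatten,
      ((∃ v ∈ vs, (v.filter fun q => q.1 == B.1).length = 2) → (ι B).2 = B.2) ∧
      ((¬ ∃ v ∈ vs, (v.filter fun q => q.1 == B.1).length = 2) → (ι B).2 = τ B.2)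

/-- The nanophrase is even: every constituent word has even length. -/
def IsEvenPhrase {α : Type} (vs : List (List (Letter α))) : Prop :=
  ∀ v ∈ vs, Even v.length

/-- The moves (TR): isomorphisms, the three homotopy moves, and surgeries. -/
inductive NanoMove {α : Type} (τ : α → α) : List (Letter α) → List (Letter α) → Prop
  | iso (w : List (Letter α)) (f : ℕ → ℕ) (hf : Function.Injective f)
      (hw : IsNanoword w) :
      NanoMove τ w (w.map fun p => (f p.1, p.2))
  | h1 (x y : List (Letter α)) (A : Letter α)
      (hw : IsNanoword (x ++ [A, A] ++ y)) :
      NanoMove τ (x ++ [A, A] ++ y) (x ++ y)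
  | h2 (x y z : List (Letter α)) (A B : Letter α) (hAB : B.2 = τ A.2)
      (hw : IsNanoword (x ++ [A, B] ++ y ++ [B, A] ++ z)) :
      NanoMove τ (x ++ [A, B] ++ y ++ [B, A] ++ z) (x ++ y ++ z)
  | h3 (x y z t : List (Letter α)) (A B C : Letter α)
      (hAB : A.2 = B.2) (hBC : B.2 = C.2)
      (hw : IsNanoword (x ++ [A, B] ++ y ++ [A, C] ++ z ++ [B, C] ++ t)) :
      NanoMove τ (x ++ [A, B] ++ y ++ [A, C] ++ z ++ [B, C] ++ t)
                 (x ++ [B, A] ++ y ++ [C, A] ++ z ++ [C, B] ++ t)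
  | surgery (xs vs : List (List (Letter α))) (hlen : xs.length = vs.length + 1)
      (hsym : IsSymPhrase τ vs) (heven : IsEvenPhrase vs)
      (hw : IsNanoword (splice xs vs)) :
      NanoMove τ (splice xs vs) xs.flatten

/-- Cobordism: the equivalence relation generated by the moves (TR). -/
def Cobordant {α : Type} (τ : α → α) : List (Letter α) → List (Letter α) → Prop :=
  Relation.EqvGen (NanoMove τ)

/-- The type of nanowords over `α`. -/
def Nano (α : Type) := {w : List (Letter α) // IsNanoword w}

/-- The setoid of cobordism on nanowords. -/
def nanoSetoid {α : Type} (τ : α → α) : Setoid (Nano α) where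
  r v w := Cobordant τ v.1 w.1
  iseqv := ⟨fun v => Relation.EqvGen.refl v.1,
    fun h => Relation.EqvGen.symm _ _ h,
    fun h h' => Relation.EqvGen.trans _ _ _ h h'⟩

/-!
Multiplication concatenates representatives after relabelling the letters of the first
factor by even and those of the second by odd numbers. It respects cobordism because a move
relabelled into the even (or odd) numbers can still be performed next to a word whose letters
are all odd (or even). A concatenation `v w` of nanowords with disjoint letters is an
isomorphic copy of this product, which gives the unit and associativity. The word `w · w⁻`
is symmetric under the involution exchanging `2n` and `2n + 1`, so a single surgery deletes
it; hence the class of `w⁻` is a two-sided inverse of that of `w`, and uniqueness of inverses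
shows that `w ↦ w⁻` respects cobordism.
-/

open Function Set

lemma exists_injective_eqOn {s : Set ℕ} (hs : s.Finite) {f : ℕ → ℕ} (hf : InjOn f s) :
    ∃ g : ℕ → ℕ, Injective g ∧ EqOn g f s := by
  classical
  obtain ⟨N, hN⟩ := (hs.image f).bddAbove
  refine ⟨s.piecewise f (N + 1 + ·), fun m n hmn => ?_, s.piecewise_eqOn _ _⟩
  have hbound : ∀ {k}, k ∈ s → f k ≤ N := fun hk => hN (mem_image_of_mem f hk)
  by_cases hm : m ∈ s <;> by_cases hn : n ∈ s <;> simp only [piecewise_eq_of_mem,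
    piecewise_eq_of_notMem, hm, hn, not_false_eq_true] at hmn
  · exact hf hm hn hmn
  · have := hbound hm; omega
  · have := hbound hn; omega
  · omega

section

variable {α : Type} {τ : α → α}

def relabel (f : ℕ → ℕ) (w : List (Letter α)) : List (Letter α) := w.map (Prod.map f id)

@[simp] lemma relabel_cons (f : ℕ → ℕ) (p : Letter α) (w : List (Letter α)) :
    relabel f (p :: w) = (f p.1, p.2) :: relabel f w := rfl

@[simp] lemma relabel_append (f : ℕ → ℕ) (a b : List (Letter α)) :
    relabel f (a ++ b) = relabel f a ++ relabel f b := List.map_append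

lemma relabel_reverse (f : ℕ → ℕ) (w : List (Letter α)) :
    relabel f w.reverse = (relabel f w).reverse := List.map_reverse ..

@[simp] lemma relabel_relabel (f g : ℕ → ℕ) (w : List (Letter α)) :
    relabel f (relabel g w) = relabel (f ∘ g) w := by
  simp [relabel, Prod.map_comp_map]

@[simp] lemma length_relabel (f : ℕ → ℕ) (w : List (Letter α)) :
    (relabel f w).length = w.length := List.length_map _

lemma relabel_id (w : List (Letter α)) : relabel id w = w := by simp [relabel]

lemma mem_lettersOf {w : List (Letter α)} {n : ℕ} :
    n ∈ lettersOf w ↔ ∃ p ∈ w, p.1 = n := by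
  simp [lettersOf]

lemma fst_mem_lettersOf {w : List (Letter α)} {p : Letter α} (h : p ∈ w) :
    p.1 ∈ lettersOf w := ⟨p.2, h⟩

lemma mem_relabel {f : ℕ → ℕ} {w : List (Letter α)} {q : Letter α} :
    q ∈ relabel f w ↔ ∃ p ∈ w, (f p.1, p.2) = q := by
  simp [relabel, Prod.map]

lemma relabel_congr {f g : ℕ → ℕ} {w : List (Letter α)} (h : EqOn f g (lettersOf w)) :
    relabel f w = relabel g w :=
  List.map_congr_left fun _ hp => Prod.ext (h (fst_mem_lettersOf hp)) rfl

lemma relabel_eq_self {f : ℕ → ℕ} {w : List (Letter α)} (h : EqOn f id (lettersOf w)) :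
    relabel f w = w :=
  (relabel_congr h).trans (relabel_id w)

@[simp] lemma lettersOf_nil : lettersOf ([] : List (Letter α)) = ∅ := by simp [lettersOf]

lemma lettersOf_append (a b : List (Letter α)) :
    lettersOf (a ++ b) = lettersOf a ∪ lettersOf b := by
  ext n; simp [lettersOf, exists_or]

lemma lettersOf_relabel (f : ℕ → ℕ) (w : List (Letter α)) :
    lettersOf (relabel f w) = f '' lettersOf w := by
  ext n; simp only [mem_lettersOf, relabel, List.mem_map, mem_image]; aesop

lemma lettersOf_relabel_subset_range (f : ℕ → ℕ) (w : List (Letter α)) :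
    lettersOf (relabel f w) ⊆ range f := by
  rw [lettersOf_relabel]; exact image_subset_range f _

lemma lettersOf_finite (w : List (Letter α)) : (lettersOf w).Finite :=
  (w.map Prod.fst).finite_toSet.subset fun _ hn => by simpa [mem_lettersOf] using hn

def idCount (n : ℕ) (w : List (Letter α)) : ℕ := (w.filter fun q => q.1 == n).length

lemma idCount_append (n : ℕ) (a b : List (Letter α)) :
    idCount n (a ++ b) = idCount n a + idCount n b := by
  simp [idCount, List.filter_append]

lemma idCount_reverse (n : ℕ) (w : List (Letter α)) : idCount n w.reverse = idCount n w := by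
  simp [idCount, List.filter_reverse]

lemma idCount_relabel {f : ℕ → ℕ} (hf : Injective f) (n : ℕ) (w : List (Letter α)) :
    idCount (f n) (relabel f w) = idCount n w := by
  simp only [idCount, relabel, ← List.countP_eq_length_filter, List.countP_map]
  exact List.countP_congr fun q _ => by simp [hf.eq_iff]

lemma idCount_eq_zero {n : ℕ} {w : List (Letter α)} (h : n ∉ lettersOf w) :
    idCount n w = 0 := by
  simp only [idCount, List.length_eq_zero_iff, List.filter_eq_nil_iff, beq_iff_eq]
  exact fun q hq hqn => h (hqn ▸ fst_mem_lettersOf hq)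

lemma IsNanoword.idCount_eq_two {w : List (Letter α)} (hw : IsNanoword w) {p : Letter α}
    (hp : p ∈ w) : idCount p.1 w = 2 :=
  hw.1 p hp

lemma isNanoword_nil : IsNanoword ([] : List (Letter α)) := ⟨by simp, by simp⟩

lemma IsNanoword.reverse {w : List (Letter α)} (hw : IsNanoword w) : IsNanoword w.reverse :=
  ⟨fun p hp => (idCount_reverse p.1 w).trans (hw.1 p (List.mem_reverse.1 hp)),
    fun p hp q hq => hw.2 p (List.mem_reverse.1 hp) q (List.mem_reverse.1 hq)⟩

lemma IsNanoword.relabel {w : List (Letter α)} (hw : IsNanoword w) {f : ℕ → ℕ}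
    (hf : Injective f) : IsNanoword (relabel f w) := by
  refine ⟨fun p' hp' => ?_, fun p' hp' q' hq' hpq => ?_⟩
  · obtain ⟨p, hp, rfl⟩ := mem_relabel.1 hp'
    exact (idCount_relabel hf p.1 w).trans (hw.idCount_eq_two hp)
  · obtain ⟨p, hp, rfl⟩ := mem_relabel.1 hp'
    obtain ⟨q, hq, rfl⟩ := mem_relabel.1 hq'
    exact hw.2 p hp q hq (hf hpq)

lemma IsNanoword.insert {x u y : List (Letter α)} (hxy : IsNanoword (x ++ y))
    (hu : IsNanoword u) (hd : Disjoint (lettersOf u) (lettersOf (x ++ y))) :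
    IsNanoword (x ++ u ++ y) := by
  have hcount : ∀ n, idCount n (x ++ u ++ y) = idCount n u + idCount n (x ++ y) := by
    intro n; simp only [idCount_append]; omega
  have hmem : ∀ {p}, p ∈ x ++ u ++ y ↔ p ∈ u ∨ p ∈ x ++ y := by
    intro p; simp only [List.mem_append]; tauto
  refine ⟨fun p hp => ?_, fun p hp q hq hpq => ?_⟩
  · change idCount p.1 _ = 2
    rw [hcount]
    rcases hmem.1 hp with h | h
    · rw [hu.idCount_eq_two h, idCount_eq_zero (hd.notMem_of_mem_left (fst_mem_lettersOf h))]
    · rw [hxy.idCount_eq_two h, idCount_eq_zero (hd.notMem_of_mem_right (fst_mem_lettersOf h))]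
  · rcases hmem.1 hp with h | h <;> rcases hmem.1 hq with h' | h'
    · exact hu.2 p h q h' hpq
    · exact (hd.ne_of_mem (fst_mem_lettersOf h) (fst_mem_lettersOf h') hpq).elim
    · exact (hd.ne_of_mem (fst_mem_lettersOf h') (fst_mem_lettersOf h) hpq.symm).elim
    · exact hxy.2 p h q h' hpq

lemma IsNanoword.append {a b : List (Letter α)} (ha : IsNanoword a) (hb : IsNanoword b)
    (hd : Disjoint (lettersOf a) (lettersOf b)) : IsNanoword (a ++ b) := by
  simpa using IsNanoword.insert (x := a) (y := []) (by simpa using ha) hb (by simpa using hd.symm)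

lemma NanoMove.isNanoword_left {u v : List (Letter α)} (h : NanoMove τ u v) : IsNanoword u := by
  cases h <;> assumption

lemma cobordant_relabel {w : List (Letter α)} (hw : IsNanoword w) {f : ℕ → ℕ}
    (hf : InjOn f (lettersOf w)) : Cobordant τ w (relabel f w) := by
  obtain ⟨g, hg, hgf⟩ := exists_injective_eqOn (lettersOf_finite w) hf
  rw [← relabel_congr hgf]
  exact .rel _ _ (.iso w g hg hw)

lemma relabel_splice (f : ℕ → ℕ) :
    ∀ xs vs : List (List (Letter α)),
      relabel f (splice xs vs) = splice (xs.map (relabel f)) (vs.map (relabel f))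
  | [], _ => rfl
  | x :: xs, [] => by simp [splice, relabel_splice f xs []]
  | x :: xs, v :: vs => by simp [splice, relabel_splice f xs vs]

lemma flatten_map_relabel (f : ℕ → ℕ) (xs : List (List (Letter α))) :
    (xs.map (relabel f)).flatten = relabel f xs.flatten :=
  List.map_flatten.symm

lemma IsSymPhrase.map_relabel {vs : List (List (Letter α))} (h : IsSymPhrase τ vs)
    {f : ℕ → ℕ} (hf : Injective f) : IsSymPhrase τ (vs.map (relabel f)) := by
  obtain ⟨ι, hrev, hval⟩ := h
  have hι : Prod.map f id ∘ ι =
      (Prod.map f id ∘ ι ∘ Prod.map (invFun f) id) ∘ Prod.map f id := by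
    ext1 p; simp [Prod.map, leftInverse_invFun hf p.1]
  refine ⟨Prod.map f id ∘ ι ∘ Prod.map (invFun f) id, ?_, ?_⟩
  · simp only [List.mem_map, forall_exists_index, and_imp]
    rintro _ v hv rfl
    rw [relabel, List.map_map, ← hι, ← List.map_map, hrev v hv, List.map_reverse]
  · intro B' hB'
    rw [flatten_map_relabel] at hB'
    obtain ⟨B, hB, rfl⟩ := mem_relabel.1 hB'
    have hcount : (∃ v ∈ vs.map (relabel f), idCount (f B.1) v = 2) ↔
        ∃ v ∈ vs, idCount B.1 v = 2 := by
      simp [idCount_relabel hf]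
    have hι' : ((Prod.map f id ∘ ι ∘ Prod.map (invFun f) id) (f B.1, B.2)).2 = (ι B).2 := by
      simp [leftInverse_invFun hf B.1]
    exact ⟨fun h => hι'.trans ((hval B hB).1 (hcount.1 h)),
      fun h => hι'.trans ((hval B hB).2 (mt hcount.2 h))⟩

lemma IsEvenPhrase.map_relabel {vs : List (List (Letter α))} (h : IsEvenPhrase vs)
    (f : ℕ → ℕ) : IsEvenPhrase (vs.map (relabel f)) := by
  simpa [IsEvenPhrase] using h

lemma nanoMove_relabel {u v : List (Letter α)} (h : NanoMove τ u v) {f : ℕ → ℕ}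
    (hf : Injective f) : NanoMove τ (relabel f u) (relabel f v) := by
  have hw := h.isNanoword_left.relabel hf
  cases h with
  | iso _ g hg _ =>
    have hconj : InjOn (f ∘ g ∘ invFun f) (f '' lettersOf u) := by
      rintro _ ⟨m, -, rfl⟩ _ ⟨n, -, rfl⟩ hmn
      simp only [comp_apply, leftInverse_invFun hf _] at hmn
      rw [hg (hf hmn)]
    obtain ⟨g', hg', hg'f⟩ := exists_injective_eqOn ((lettersOf_finite u).image f) hconj
    have hrel : relabel f (relabel g u) = relabel g' (relabel f u) := by
      rw [relabel_relabel, relabel_relabel]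
      refine relabel_congr fun n hn => ?_
      simp [hg'f (mem_image_of_mem f hn), leftInverse_invFun hf n]
    change NanoMove τ _ (relabel f (relabel g u))
    rw [hrel]
    exact .iso _ g' hg' hw
  | h1 x y A _ =>
    simpa using NanoMove.h1 (τ := τ) (relabel f x) (relabel f y) (f A.1, A.2) (by simpa using hw)
  | h2 x y z A B hAB _ =>
    simpa using NanoMove.h2 (τ := τ) (relabel f x) (relabel f y) (relabel f z) (f A.1, A.2)
      (f B.1, B.2) hAB (by simpa using hw)
  | h3 x y z t A B C hAB hBC _ =>
    simpa using NanoMove.h3 (τ := τ) (relabel f x) (relabel f y) (relabel f z) (relabel f t)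
      (f A.1, A.2) (f B.1, B.2) (f C.1, C.2) hAB hBC (by simpa using hw)
  | surgery xs vs hlen hsym heven _ =>
    rw [relabel_splice, ← flatten_map_relabel]
    exact .surgery _ _ (by simpa using hlen) (hsym.map_relabel hf) (heven.map_relabel f)
      (by rwa [relabel_splice] at hw)

lemma exists_splice_eq_append (x y : List (Letter α)) :
    ∀ (vs xs : List (List (Letter α))), xs.length = vs.length + 1 →
      ∃ xs' : List (List (Letter α)), xs'.length = vs.length + 1 ∧
        splice xs' vs = x ++ splice xs vs ++ y ∧ xs'.flatten = x ++ xs.flatten ++ y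
  | [], [x₀], _ => ⟨[x ++ x₀ ++ y], rfl, by simp [splice], by simp⟩
  | v :: vs, x₀ :: xs, hlen => by
    obtain ⟨xs', hlen', hsplice, hflat⟩ :=
      exists_splice_eq_append [] y vs xs (by simpa using hlen)
    refine ⟨(x ++ x₀) :: xs', by simpa using hlen', ?_, ?_⟩
    · simp [splice, hsplice]
    · simp [hflat]

lemma NanoMove.cobordant_insert {u v x y : List (Letter α)} (h : NanoMove τ u v)
    (hxy : IsNanoword (x ++ y)) (hu : Disjoint (lettersOf u) (lettersOf (x ++ y)))
    (hv : Disjoint (lettersOf v) (lettersOf (x ++ y))) :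
    Cobordant τ (x ++ u ++ y) (x ++ v ++ y) := by
  have hw : IsNanoword (x ++ u ++ y) := hxy.insert h.isNanoword_left hu
  cases h with
  | iso _ f hf _ =>
    change Disjoint (lettersOf (relabel f u)) _ at hv
    change Cobordant τ _ (x ++ relabel f u ++ y)
    classical
    set g := (lettersOf u).piecewise f id
    have hg_out : EqOn g id (lettersOf (x ++ y)) := fun n hn =>
      piecewise_eq_of_notMem _ _ _ (hu.notMem_of_mem_right hn)
    have hinj : InjOn g (lettersOf (x ++ u ++ y)) := by
      have hsplit : lettersOf (x ++ u ++ y) = lettersOf u ∪ lettersOf (x ++ y) := by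
        simp only [lettersOf_append]; ext; simp only [mem_union]; tauto
      rw [hsplit, injOn_union hu]
      refine ⟨hf.injOn.congr (piecewise_eqOn _ _ _).symm, injOn_id _ |>.congr hg_out.symm,
        fun a ha b hb hab => hv.ne_of_mem ?_ hb (hab.trans (hg_out hb))⟩
      rw [lettersOf_relabel]
      exact ⟨a, ha, (piecewise_eq_of_mem _ _ _ ha).symm⟩
    have hside : ∀ z : List (Letter α), lettersOf z ⊆ lettersOf (x ++ y) → relabel g z = z :=
      fun _ hz => relabel_eq_self (hg_out.mono hz)
    have := cobordant_relabel (τ := τ) hw hinj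
    rwa [relabel_append, relabel_append, relabel_congr (piecewise_eqOn _ _ _),
      hside x (by simp [lettersOf_append]), hside y (by simp [lettersOf_append])] at this
  | h1 x' y' A _ =>
    have hmove := NanoMove.h1 (τ := τ) (x ++ x') (y' ++ y) A (by simpa using hw)
    exact .rel _ _ (by simpa using hmove)
  | h2 x' y' z' A B hAB _ =>
    have hmove := NanoMove.h2 (τ := τ) (x ++ x') y' (z' ++ y) A B hAB (by simpa using hw)
    exact .rel _ _ (by simpa using hmove)
  | h3 x' y' z' t' A B C hAB hBC _ =>
    have hmove := NanoMove.h3 (τ := τ) (x ++ x') y' z' (t' ++ y) A B C hAB hBC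
      (by simpa using hw)
    exact .rel _ _ (by simpa using hmove)
  | surgery xs vs hlen hsym heven _ =>
    obtain ⟨xs', hlen', hsplice, hflat⟩ := exists_splice_eq_append x y vs xs hlen
    rw [← hsplice, ← hflat]
    exact .rel _ _ (.surgery xs' vs hlen' hsym heven (hsplice ▸ hw))

lemma Cobordant.relabel_insert {a b x y : List (Letter α)} (h : Cobordant τ a b)
    {f : ℕ → ℕ} (hf : Injective f) (hxy : IsNanoword (x ++ y))
    (hd : Disjoint (range f) (lettersOf (x ++ y))) :
    Cobordant τ (x ++ relabel f a ++ y) (x ++ relabel f b ++ y) := by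
  induction h with
  | rel u v huv =>
    exact (nanoMove_relabel huv hf).cobordant_insert hxy
      (hd.mono_left (lettersOf_relabel_subset_range f u))
      (hd.mono_left (lettersOf_relabel_subset_range f v))
  | refl => exact .refl _
  | symm _ _ _ ih => exact .symm _ _ ih
  | trans _ _ _ _ _ ih₁ ih₂ => exact .trans _ _ _ ih₁ ih₂

lemma cobordant_nil_of_relabel_eq_reverse {z : List (Letter α)} (hz : IsNanoword z)
    {σ : ℕ → ℕ} (hσ : relabel σ z = z.reverse) (heven : Even z.length) :
    Cobordant τ z [] := by
  have hsym : IsSymPhrase τ [z] :=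
    ⟨Prod.map σ id, by simpa [relabel] using hσ, fun B hB =>
      ⟨fun _ => rfl,
        fun h => (h ⟨z, by simp, hz.idCount_eq_two (by simpa using hB)⟩).elim⟩⟩
  have hsplice : splice [[], []] [z] = z := by simp [splice]
  have hmove := NanoMove.surgery [[], []] [z] rfl hsym (by simpa [IsEvenPhrase] using heven)
    (by rwa [hsplice])
  rw [hsplice] at hmove
  exact .rel _ _ hmove

lemma injective_two_mul : Injective (2 * · : ℕ → ℕ) := fun _ _ h => by simpa using h

lemma injective_two_mul_add_one : Injective (2 * · + 1 : ℕ → ℕ) :=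
  fun _ _ h => by simpa using h

lemma disjoint_range_two_mul : Disjoint (range (2 * · : ℕ → ℕ)) (range (2 * · + 1)) :=
  Set.disjoint_left.2 (by rintro _ ⟨m, rfl⟩ ⟨n, h⟩; dsimp only at h; omega)

namespace Nano

def reverse (v : Nano α) : Nano α := ⟨v.1.reverse, v.2.reverse⟩

lemma reverse_reverse (v : Nano α) : v.reverse.reverse = v := Subtype.ext v.1.reverse_reverse

def parityConcat (v w : Nano α) : Nano α :=
  ⟨relabel (2 * ·) v.1 ++ relabel (2 * · + 1) w.1,
    (v.2.relabel injective_two_mul).append (w.2.relabel injective_two_mul_add_one)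
      (disjoint_range_two_mul.mono (lettersOf_relabel_subset_range _ _)
        (lettersOf_relabel_subset_range _ _))⟩

lemma parityConcat_congr {a a' b b' : Nano α} (ha : Cobordant τ a.1 a'.1)
    (hb : Cobordant τ b.1 b'.1) : Cobordant τ (parityConcat a b).1 (parityConcat a' b').1 := by
  have h₁ := ha.relabel_insert (x := []) injective_two_mul
    (b.2.relabel injective_two_mul_add_one)
    (disjoint_range_two_mul.mono_right (lettersOf_relabel_subset_range _ _))
  have h₂ := hb.relabel_insert (y := []) injective_two_mul_add_one
    (by simpa using a'.2.relabel injective_two_mul)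
    (by simpa using
      disjoint_range_two_mul.symm.mono_right (lettersOf_relabel_subset_range _ a'.1))
  simp only [List.nil_append, List.append_nil] at h₁ h₂
  exact .trans _ _ _ h₁ h₂

lemma parityConcat_assoc (v w u : Nano α) :
    Cobordant τ (parityConcat (parityConcat v w) u).1 (parityConcat v (parityConcat w u)).1 := by
  set f : ℕ → ℕ := fun n =>
    if n % 4 = 0 then n / 2 else if n % 4 = 2 then n - 1 else 2 * n + 1
  have hf : Injective f := by
    intro m n h
    simp only [f] at h
    split_ifs at h <;> omega
  have h₁ : f ∘ (2 * ·) ∘ (2 * ·) = (2 * ·) := funext fun n => by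
    simp only [f, comp_apply]; split_ifs <;> omega
  have h₂ : f ∘ (2 * ·) ∘ (2 * · + 1) = (2 * · + 1) ∘ (2 * ·) := funext fun n => by
    simp only [f, comp_apply]; split_ifs <;> omega
  have h₃ : f ∘ (2 * · + 1) = (2 * · + 1) ∘ (2 * · + 1) := funext fun n => by
    simp only [f, comp_apply]; split_ifs <;> omega
  have hrel : relabel f (parityConcat (parityConcat v w) u).1 =
      (parityConcat v (parityConcat w u)).1 := by
    simp only [parityConcat, relabel_append, relabel_relabel, List.append_assoc, h₁, h₂, h₃]
  have hmove : NanoMove τ _ _ := .iso _ f hf (parityConcat (parityConcat v w) u).2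
  exact .rel _ _ (hrel ▸ hmove)

end Nano

open Nano

instance : Mul (Quotient (nanoSetoid τ)) :=
  ⟨Quotient.map₂ parityConcat fun _ _ ha _ _ hb => parityConcat_congr ha hb⟩

instance : One (Quotient (nanoSetoid τ)) := ⟨Quotient.mk _ ⟨[], isNanoword_nil⟩⟩

lemma mk_mul_mk_of_disjoint {v w u : Nano α} (hd : Disjoint (lettersOf v.1) (lettersOf w.1))
    (hu : u.1 = v.1 ++ w.1) :
    Quotient.mk (nanoSetoid τ) v * Quotient.mk _ w = Quotient.mk _ u := by
  classical
  set f := (lettersOf v.1).piecewise (2 * ·) (2 * · + 1)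
  have hf : Injective f := by
    intro m n h
    by_cases hm : m ∈ lettersOf v.1 <;> by_cases hn : n ∈ lettersOf v.1 <;>
      simp only [f, piecewise_eq_of_mem, piecewise_eq_of_notMem, hm, hn,
        not_false_eq_true] at h <;> omega
  have hrel : relabel f u.1 = (parityConcat v w).1 := by
    rw [hu, relabel_append, relabel_congr (piecewise_eqOn _ _ _),
      relabel_congr fun n hn => piecewise_eq_of_notMem _ _ _ (hd.notMem_of_mem_right hn)]
    rfl
  have hmove : NanoMove τ u.1 (relabel f u.1) := .iso _ f hf u.2
  exact Quotient.sound (.symm _ _ (.rel _ _ (hrel ▸ hmove)))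

instance : Monoid (Quotient (nanoSetoid τ)) where
  mul_assoc a b c :=
    Quotient.inductionOn₃ a b c fun v w u => Quotient.sound (parityConcat_assoc v w u)
  one_mul a := Quotient.inductionOn a fun _ => mk_mul_mk_of_disjoint (by simp) rfl
  mul_one a := Quotient.inductionOn a fun _ => mk_mul_mk_of_disjoint (by simp) (by simp)

lemma mk_mul_mk_reverse (v : Nano α) :
    Quotient.mk (nanoSetoid τ) v * Quotient.mk _ v.reverse = 1 := by
  set σ : ℕ → ℕ := fun n => if n % 2 = 0 then n + 1 else n - 1
  have hσ : relabel σ (parityConcat v v.reverse).1 = (parityConcat v v.reverse).1.reverse := by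
    have h₁ : σ ∘ (2 * ·) = (2 * · + 1) := funext fun n => by simp [σ]
    have h₂ : σ ∘ (2 * · + 1) = (2 * ·) := funext fun n => by simp [σ]
    simp only [parityConcat, Nano.reverse, relabel_append, relabel_relabel, h₁, h₂,
      List.reverse_append, ← relabel_reverse, List.reverse_reverse]
  refine Quotient.sound (cobordant_nil_of_relabel_eq_reverse (parityConcat v v.reverse).2 hσ ?_)
  simp [parityConcat, Nano.reverse, ← two_mul]

instance : Inv (Quotient (nanoSetoid τ)) :=
  ⟨Quotient.lift (fun v => Quotient.mk _ v.reverse) fun a b (h : Cobordant τ a.1 b.1) =>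
    left_inv_eq_right_inv (by simpa [reverse_reverse] using mk_mul_mk_reverse a.reverse)
      (by rw [Quotient.sound h]; exact mk_mul_mk_reverse b)⟩

lemma inv_mk (v : Nano α) : (Quotient.mk (nanoSetoid τ) v)⁻¹ = Quotient.mk _ v.reverse := rfl

instance : Group (Quotient (nanoSetoid τ)) where
  inv_mul_cancel a := Quotient.inductionOn a fun v => by
    simpa [inv_mk, reverse_reverse] using mk_mul_mk_reverse v.reverse

end

/-- The cobordism classes of nanowords over `(α, τ)` form a group
under concatenation, in which the inverse of the class of `w` is the class of
the opposite nanoword `w⁻`. -/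
theorem cobordismClasses_group {α : Type} (τ : α → α) :
    ∃ (mul : Quotient (nanoSetoid τ) → Quotient (nanoSetoid τ) → Quotient (nanoSetoid τ))
      (one : Quotient (nanoSetoid τ))
      (inv : Quotient (nanoSetoid τ) → Quotient (nanoSetoid τ)),
      -- multiplication is induced by concatenation (of disjoint representatives)
      (∀ v w u : Nano α, Disjoint (lettersOf v.1) (lettersOf w.1) →
        u.1 = v.1 ++ w.1 →
        mul (Quotient.mk (nanoSetoid τ) v) (Quotient.mk (nanoSetoid τ) w)
          = Quotient.mk (nanoSetoid τ) u) ∧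
      -- the unit is the class of the empty nanoword
      (∀ u : Nano α, u.1 = [] → one = Quotient.mk (nanoSetoid τ) u) ∧
      -- the inverse of the class of `w` is the class of `w⁻`
      (∀ v u : Nano α, u.1 = v.1.reverse →
        inv (Quotient.mk (nanoSetoid τ) v) = Quotient.mk (nanoSetoid τ) u) ∧
      -- the group axioms
      (∀ a b c, mul (mul a b) c = mul a (mul b c)) ∧
      (∀ a, mul one a = a) ∧ (∀ a, mul a one = a) ∧
      (∀ a, mul (inv a) a = one) ∧ (∀ a, mul a (inv a) = one) := by
  refine ⟨(· * ·), 1, (·⁻¹), fun v w u hd hu => mk_mul_mk_of_disjoint hd hu,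
    fun u hu => congrArg _ (Subtype.ext hu.symm), fun v u hu => congrArg _ (Subtype.ext hu.symm),
    mul_assoc, one_mul, mul_one, inv_mul_cancel, mul_inv_cancel⟩
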